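/- arXiv:1811.02550 — 2 statements merged into one kernel-verified Lean document; each statement's English description precedes it below -/
import Mathlib

section
/- Let X be the random variable whose distribution is given by the q-binomial coefficient binomial(a+b, b)_q / binomial(a+b,b)_1 (i.e., distribution of the 'area' statistic). Then the expected value of X is ab/2 and the variance of X is ab(a+b+1)/12. -/
open Polynomial

/-- The `q`-integer `[m]_q = 1 + q + ⋯ + q^{m-1}` as a polynomial over `ℚ`. -/
noncomputable def qInt (m : ℕ) : Polynomial ℚ :=
  ∑ j ∈ Finset.range m, Polynomial.X ^ j

/-- Expectation of the random variable taking value `j` with probability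
proportional to the coefficient of `q^j` in `F`. -/
noncomputable def polyExp (F : Polynomial ℚ) : ℚ :=
  (∑ j ∈ Finset.range (F.natDegree + 1), (j : ℚ) * F.coeff j) / F.eval 1

/-- Variance of the random variable taking value `j` with probability
proportional to the coefficient of `q^j` in `F`. -/
noncomputable def polyVar (F : Polynomial ℚ) : ℚ :=
  (∑ j ∈ Finset.range (F.natDegree + 1), (j : ℚ) ^ 2 * F.coeff j) / F.eval 1
    - polyExp F ^ 2

/-!
Evaluating derivatives at `q = 1` turns the mean and variance of the coefficient distribution of a
polynomial into functionals that are additive over products with nonzero value at `1`: they are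
the first two cumulants of a probability generating function. The `q`-integer `[m]_q` is the
generating function of the uniform distribution on `{0, …, m - 1}`, with mean `(m - 1) / 2` and
variance `(m² - 1) / 12`, so `F = ∏ [a + i]_q / ∏ [i]_q` has mean `∑ a / 2 = a b / 2` and variance
`∑ ((a + i)² - i²) / 12 = a b (a + b + 1) / 12`.
-/

open Finset

namespace Polynomial

section CommSemiring

variable {R : Type*} [CommSemiring R]

theorem eval_one_derivative_eq_sum (p : R[X]) {n : ℕ} (hn : p.natDegree < n) :
    (derivative p).eval 1 = ∑ j ∈ range n, (j : R) * p.coeff j := by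
  rw [derivative_eval, sum_over_range' p (by simp) n hn]
  simp [mul_comm]

theorem coeff_X_mul_derivative (p : R[X]) (j : ℕ) :
    (X * derivative p).coeff j = j * p.coeff j := by
  cases j with
  | zero => simp
  | succ j => rw [coeff_X_mul, coeff_derivative, mul_comm]; push_cast; rfl

theorem eval_one_derivative_X_mul_derivative_eq_sum (p : R[X]) :
    (derivative (X * derivative p)).eval 1 =
      ∑ j ∈ range (p.natDegree + 1), (j : R) ^ 2 * p.coeff j := by
  have hdeg : (X * derivative p).natDegree < p.natDegree + 1 := by
    refine Nat.lt_succ_of_le (natDegree_le_iff_coeff_eq_zero.mpr fun N hN => ?_)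
    rw [coeff_X_mul_derivative, coeff_eq_zero_of_natDegree_lt hN, mul_zero]
  rw [eval_one_derivative_eq_sum _ hdeg]
  simp only [coeff_X_mul_derivative, ← mul_assoc, sq]

theorem eval_one_derivative_X_pow (j : ℕ) : (derivative (X ^ j : R[X])).eval 1 = j := by
  simp [derivative_X_pow]

theorem eval_one_derivative_X_mul_derivative_X_pow (j : ℕ) :
    (derivative (X * derivative (X ^ j : R[X]))).eval 1 = (j : R) ^ 2 := by
  cases j with
  | zero => simp
  | succ j =>
    rw [derivative_X_pow, Nat.add_sub_cancel, ← mul_assoc, mul_comm X, mul_assoc, ← pow_succ']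
    simp [sq]

theorem eval_prod_ne_zero [NoZeroDivisors R] [Nontrivial R] {ι : Type*} {s : Finset ι}
    {f : ι → R[X]} {x : R} (hf : ∀ i ∈ s, (f i).eval x ≠ 0) : (∏ i ∈ s, f i).eval x ≠ 0 := by
  rw [eval_prod]
  exact prod_ne_zero_iff.mpr hf

end CommSemiring

section Field

variable {K : Type*} [Field K]

-- `(X p')'(1) = ∑ j² pⱼ`, so for `p` with nonnegative coefficients these are the mean and
-- variance of the distribution proportional to the coefficients.
noncomputable def pgfMean (p : K[X]) : K :=
  (derivative p).eval 1 / p.eval 1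

noncomputable def pgfVariance (p : K[X]) : K :=
  (derivative (X * derivative p)).eval 1 / p.eval 1 - pgfMean p ^ 2

variable {p q : K[X]}

theorem pgfMean_mul (hp : p.eval 1 ≠ 0) (hq : q.eval 1 ≠ 0) :
    pgfMean (p * q) = pgfMean p + pgfMean q := by
  simp only [pgfMean, derivative_mul, eval_add, eval_mul]
  field_simp

theorem pgfVariance_mul (hp : p.eval 1 ≠ 0) (hq : q.eval 1 ≠ 0) :
    pgfVariance (p * q) = pgfVariance p + pgfVariance q := by
  simp only [pgfVariance, pgfMean, derivative_mul, mul_add, derivative_add, eval_add, eval_mul,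
    derivative_X, eval_X, eval_one]
  field_simp
  ring

theorem pgfMean_prod {ι : Type*} (s : Finset ι) (f : ι → K[X]) (hf : ∀ i ∈ s, (f i).eval 1 ≠ 0) :
    pgfMean (∏ i ∈ s, f i) = ∑ i ∈ s, pgfMean (f i) := by
  induction s using Finset.cons_induction with
  | empty => simp [pgfMean]
  | cons i s hi ih =>
    rw [forall_mem_cons] at hf
    rw [prod_cons, sum_cons, pgfMean_mul hf.1 (eval_prod_ne_zero hf.2), ih hf.2]

theorem pgfVariance_prod {ι : Type*} (s : Finset ι) (f : ι → K[X])
    (hf : ∀ i ∈ s, (f i).eval 1 ≠ 0) :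
    pgfVariance (∏ i ∈ s, f i) = ∑ i ∈ s, pgfVariance (f i) := by
  induction s using Finset.cons_induction with
  | empty => simp [pgfVariance, pgfMean]
  | cons i s hi ih =>
    rw [forall_mem_cons] at hf
    rw [prod_cons, sum_cons, pgfVariance_mul hf.1 (eval_prod_ne_zero hf.2), ih hf.2]

theorem pgfMean_eq_sub_of_mul_eq {r : K[X]} (h : p * q = r) (hq : q.eval 1 ≠ 0)
    (hr : r.eval 1 ≠ 0) : pgfMean p = pgfMean r - pgfMean q := by
  have hp : p.eval 1 ≠ 0 := left_ne_zero_of_mul (by rwa [← eval_mul, h])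
  rw [← h, pgfMean_mul hp hq, add_sub_cancel_right]

theorem pgfVariance_eq_sub_of_mul_eq {r : K[X]} (h : p * q = r) (hq : q.eval 1 ≠ 0)
    (hr : r.eval 1 ≠ 0) : pgfVariance p = pgfVariance r - pgfVariance q := by
  have hp : p.eval 1 ≠ 0 := left_ne_zero_of_mul (by rwa [← eval_mul, h])
  rw [← h, pgfVariance_mul hp hq, add_sub_cancel_right]

end Field

end Polynomial

theorem polyExp_eq_pgfMean (F : ℚ[X]) : polyExp F = pgfMean F := by
  rw [polyExp, pgfMean, eval_one_derivative_eq_sum F (lt_add_one _)]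

theorem polyVar_eq_pgfVariance (F : ℚ[X]) : polyVar F = pgfVariance F := by
  rw [polyVar, pgfVariance, polyExp_eq_pgfMean, eval_one_derivative_X_mul_derivative_eq_sum]

theorem eval_one_qInt (m : ℕ) : (qInt m).eval 1 = m := by
  simp [qInt, eval_finsetSum]

theorem sum_range_succ_natCast (m : ℕ) : ∑ j ∈ range (m + 1), (j : ℚ) = m * (m + 1) / 2 := by
  induction m with
  | zero => simp
  | succ m ih => rw [sum_range_succ, ih]; push_cast; ring

theorem sum_range_succ_natCast_sq (m : ℕ) :
    ∑ j ∈ range (m + 1), (j : ℚ) ^ 2 = m * (m + 1) * (2 * m + 1) / 6 := by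
  induction m with
  | zero => simp
  | succ m ih => rw [sum_range_succ, ih]; push_cast; ring

theorem eval_one_qInt_succ_ne_zero (m : ℕ) : (qInt (m + 1)).eval 1 ≠ 0 := by
  rw [eval_one_qInt]; positivity

theorem pgfMean_qInt_succ (m : ℕ) : pgfMean (qInt (m + 1)) = m / 2 := by
  rw [pgfMean, eval_one_qInt, qInt, derivative_sum, eval_finsetSum]
  simp only [eval_one_derivative_X_pow]
  rw [sum_range_succ_natCast]
  push_cast
  field_simp

theorem pgfVariance_qInt_succ (m : ℕ) : pgfVariance (qInt (m + 1)) = m * (m + 2) / 12 := by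
  rw [pgfVariance, pgfMean_qInt_succ, eval_one_qInt, qInt, derivative_sum, mul_sum,
    derivative_sum, eval_finsetSum]
  simp only [eval_one_derivative_X_mul_derivative_X_pow]
  rw [sum_range_succ_natCast_sq]
  push_cast
  field_simp
  ring

theorem sum_range_add_mul_add_two_sub {R : Type*} [CommRing R] (a : R) (b : ℕ) :
    ∑ i ∈ range b, ((a + i) * (a + i + 2) - i * (i + 2)) = a * b * (a + b + 1) := by
  induction b with
  | zero => simp
  | succ b ih => rw [sum_range_succ, ih]; push_cast; ring

theorem stmt_8_general (a b : ℕ) (F : Polynomial ℚ)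
    (hF : F * ∏ i ∈ Finset.range b, qInt (i + 1)
        = ∏ i ∈ Finset.range b, qInt (a + i + 1)) :
    polyExp F = (a : ℚ) * b / 2 ∧
    polyVar F = (a : ℚ) * b * ((a : ℚ) + b + 1) / 12 := by
  have hG : ∀ i ∈ range b, (qInt (i + 1)).eval 1 ≠ 0 := fun i _ => eval_one_qInt_succ_ne_zero i
  have hH : ∀ i ∈ range b, (qInt (a + i + 1)).eval 1 ≠ 0 :=
    fun i _ => eval_one_qInt_succ_ne_zero (a + i)
  rw [polyExp_eq_pgfMean, polyVar_eq_pgfVariance,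
    pgfMean_eq_sub_of_mul_eq hF (eval_prod_ne_zero hG) (eval_prod_ne_zero hH),
    pgfVariance_eq_sub_of_mul_eq hF (eval_prod_ne_zero hG) (eval_prod_ne_zero hH),
    pgfMean_prod _ _ hG, pgfMean_prod _ _ hH,
    pgfVariance_prod _ _ hG, pgfVariance_prod _ _ hH]
  simp only [pgfMean_qInt_succ, pgfVariance_qInt_succ, ← sum_sub_distrib, ← sub_div, ← sum_div]
  push_cast
  refine ⟨?_, by rw [sum_range_add_mul_add_two_sub]⟩
  simp only [add_sub_cancel_right, sum_const, card_range, nsmul_eq_mul]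
  ring

theorem stmt_8 (a b : ℕ) (ha : 0 < a) (hb : 0 < b) (F : Polynomial ℚ)
    (hF : F * ∏ i ∈ Finset.range b, qInt (i + 1)
        = ∏ i ∈ Finset.range b, qInt (a + i + 1))
    (hpos : ∀ j, 0 ≤ F.coeff j) :
    polyExp F = (a : ℚ) * b / 2 ∧
    polyVar F = (a : ℚ) * b * ((a : ℚ) + b + 1) / 12 :=
  stmt_8_general a b F hF
end

section
/- Let P be a finite poset with a height function ht, and suppose the generating function for plane partitions of height at most k in P is ∏_{p∈P} [k+ht(p)]_q/[ht(p)]_q, with Σ_{p∈P} ht(p) = (h/2)|P|. Then the random variable X with this distribution has expectation (k/2)|P| and variance (k(k+h)/12)|P|. -/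
open Polynomial

namespace StmtAux

noncomputable def e0 (G : Polynomial ℚ) : ℚ := G.eval 1
noncomputable def e1 (G : Polynomial ℚ) : ℚ := G.derivative.eval 1
noncomputable def e2 (G : Polynomial ℚ) : ℚ := G.derivative.derivative.eval 1

noncomputable def mu (G : Polynomial ℚ) : ℚ := e1 G / e0 G
noncomputable def nu (G : Polynomial ℚ) : ℚ :=
  (e2 G + e1 G) / e0 G - (e1 G / e0 G) ^ 2

lemma e0_mul (G H : Polynomial ℚ) : e0 (G * H) = e0 G * e0 H := by
  simp [e0]

lemma e1_mul (G H : Polynomial ℚ) :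
    e1 (G * H) = e1 G * e0 H + e0 G * e1 H := by
  simp [e1, e0, derivative_mul]

lemma e2_mul (G H : Polynomial ℚ) :
    e2 (G * H) = e2 G * e0 H + 2 * e1 G * e1 H + e0 G * e2 H := by
  simp [e2, e1, e0, derivative_mul]; ring

lemma mu_mul (G H : Polynomial ℚ) (hG : e0 G ≠ 0) (hH : e0 H ≠ 0) :
    mu (G * H) = mu G + mu H := by
  unfold mu
  rw [e1_mul, e0_mul]
  field_simp

lemma nu_mul (G H : Polynomial ℚ) (hG : e0 G ≠ 0) (hH : e0 H ≠ 0) :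
    nu (G * H) = nu G + nu H := by
  unfold nu
  rw [e1_mul, e0_mul, e2_mul]
  field_simp
  ring

lemma prod_facts {ι : Type*} (s : Finset ι) (f : ι → Polynomial ℚ)
    (h : ∀ i ∈ s, e0 (f i) ≠ 0) :
    e0 (∏ i ∈ s, f i) ≠ 0 ∧ mu (∏ i ∈ s, f i) = ∑ i ∈ s, mu (f i) ∧
      nu (∏ i ∈ s, f i) = ∑ i ∈ s, nu (f i) := by
  induction s using Finset.cons_induction with
  | empty => simp [e0, mu, nu, e1, e2]
  | cons a s ha ih =>
    have hprev := ih (fun i hi => h i (Finset.mem_cons_of_mem hi))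
    have ha0 : e0 (f a) ≠ 0 := h a (Finset.mem_cons_self a s)
    rw [Finset.prod_cons, Finset.sum_cons, Finset.sum_cons]
    refine ⟨?_, ?_, ?_⟩
    · rw [e0_mul]; exact mul_ne_zero ha0 hprev.1
    · rw [mu_mul _ _ ha0 hprev.1, hprev.2.1]
    · rw [nu_mul _ _ ha0 hprev.1, hprev.2.2]

lemma sum_cast (m : ℕ) : ∑ j ∈ Finset.range m, (j : ℚ) = m * (m - 1) / 2 := by
  induction m with
  | zero => simp
  | succ n ih => rw [Finset.sum_range_succ, ih]; push_cast; ring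

lemma sum_sq_cast (m : ℕ) :
    ∑ j ∈ Finset.range m, (j : ℚ) ^ 2 = m * (m - 1) * (2 * m - 1) / 6 := by
  induction m with
  | zero => simp
  | succ n ih => rw [Finset.sum_range_succ, ih]; push_cast; ring

lemma cast_pred_mul (j : ℕ) : (j : ℚ) * ((j - 1 : ℕ) : ℚ) = (j : ℚ) ^ 2 - j := by
  cases j with
  | zero => simp
  | succ n => push_cast; ring

lemma e0_qInt (m : ℕ) : e0 (qInt m) = m := by
  simp [e0, qInt, eval_finset_sum]

lemma e1_qInt (m : ℕ) : e1 (qInt m) = m * (m - 1) / 2 := by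
  rw [← sum_cast]
  simp [e1, qInt, derivative_sum, derivative_X_pow, eval_finset_sum]

lemma e2_qInt (m : ℕ) :
    e2 (qInt m) = m * (m - 1) * (2 * m - 1) / 6 - m * (m - 1) / 2 := by
  rw [← sum_sq_cast, ← sum_cast, ← Finset.sum_sub_distrib]
  simp only [e2, qInt, derivative_sum, derivative_X_pow, derivative_C_mul,
    eval_finset_sum, eval_mul, eval_C, eval_pow, eval_X, one_pow, mul_one]
  exact Finset.sum_congr rfl fun j _ => cast_pred_mul j

lemma mu_qInt (m : ℕ) (hm : 0 < m) : mu (qInt m) = ((m : ℚ) - 1) / 2 := by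
  have : (m : ℚ) ≠ 0 := Nat.cast_ne_zero.mpr hm.ne'
  rw [mu, e0_qInt, e1_qInt]
  field_simp

lemma nu_qInt (m : ℕ) (hm : 0 < m) : nu (qInt m) = ((m : ℚ) ^ 2 - 1) / 12 := by
  have : (m : ℚ) ≠ 0 := Nat.cast_ne_zero.mpr hm.ne'
  rw [nu, e0_qInt, e1_qInt, e2_qInt]
  field_simp
  ring

lemma e1_eq (F : Polynomial ℚ) :
    e1 F = ∑ j ∈ Finset.range (F.natDegree + 1), (j : ℚ) * F.coeff j := by
  conv_lhs => rw [e1, Polynomial.as_sum_range' F (F.natDegree + 1) (Nat.lt_succ_self _)]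
  simp only [derivative_sum, derivative_monomial, eval_finset_sum, eval_monomial, one_pow, mul_one]
  exact Finset.sum_congr rfl fun j _ => mul_comm _ _

lemma e21_eq (F : Polynomial ℚ) :
    e2 F + e1 F = ∑ j ∈ Finset.range (F.natDegree + 1), (j : ℚ) ^ 2 * F.coeff j := by
  rw [e1_eq]
  have h2 : e2 F = ∑ j ∈ Finset.range (F.natDegree + 1),
      F.coeff j * ((j : ℚ) * ((j - 1 : ℕ) : ℚ)) := by
    conv_lhs => rw [e2, Polynomial.as_sum_range' F (F.natDegree + 1) (Nat.lt_succ_self _)]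
    simp only [derivative_sum, derivative_monomial, eval_finset_sum, eval_monomial, one_pow, mul_one]
    exact Finset.sum_congr rfl fun j _ => by ring
  rw [h2, ← Finset.sum_add_distrib]
  refine Finset.sum_congr rfl fun j _ => ?_
  rw [cast_pred_mul]
  ring

lemma polyExp_eq (F : Polynomial ℚ) : polyExp F = mu F := by
  rw [polyExp, mu, e1_eq, e0]

lemma polyVar_eq (F : Polynomial ℚ) : polyVar F = nu F := by
  rw [polyVar, nu, polyExp_eq, mu, e21_eq, e0]

end StmtAux

theorem stmt_9 (P : Type*) [Fintype P] [PartialOrder P]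
    (ht : P → ℕ) (hht : ∀ p, 0 < ht p) (k h : ℕ) (hk : 0 < k) (hh : 0 < h)
    (hsum : 2 * ∑ p : P, ht p = h * Fintype.card P)
    (F : Polynomial ℚ)
    (hF : F * ∏ p : P, qInt (ht p) = ∏ p : P, qInt (k + ht p))
    (hpos : ∀ j, 0 ≤ F.coeff j) :
    polyExp F = (k : ℚ) / 2 * Fintype.card P ∧
    polyVar F = (k : ℚ) * ((k : ℚ) + h) / 12 * Fintype.card P := by
  classical
  open StmtAux in
  have hA := prod_facts Finset.univ (fun p => qInt (ht p))
    (fun p _ => by rw [e0_qInt]; exact Nat.cast_ne_zero.mpr (hht p).ne')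
  have hB := prod_facts Finset.univ (fun p => qInt (k + ht p))
    (fun p _ => by rw [e0_qInt]; exact Nat.cast_ne_zero.mpr (Nat.add_pos_left hk _).ne')
  have he0 : e0 F * e0 (∏ p : P, qInt (ht p)) = e0 (∏ p : P, qInt (k + ht p)) := by
    rw [← e0_mul, hF]
  have hF0 : e0 F ≠ 0 := by
    intro h0
    rw [h0, zero_mul] at he0
    exact hB.1 he0.symm
  have hmu : mu F + mu (∏ p : P, qInt (ht p)) = mu (∏ p : P, qInt (k + ht p)) := by
    rw [← mu_mul _ _ hF0 hA.1, hF]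
  have hnu : nu F + nu (∏ p : P, qInt (ht p)) = nu (∏ p : P, qInt (k + ht p)) := by
    rw [← nu_mul _ _ hF0 hA.1, hF]
  rw [hA.2.1, hB.2.1] at hmu
  rw [hA.2.2, hB.2.2] at hnu
  have hmuF : mu F = ∑ p : P, ((((k + ht p : ℕ) : ℚ) - 1) / 2 - (((ht p : ℕ) : ℚ) - 1) / 2) := by
    rw [Finset.sum_sub_distrib]
    have e1' : ∀ p : P, mu (qInt (ht p)) = (((ht p : ℕ) : ℚ) - 1) / 2 :=
      fun p => mu_qInt _ (hht p)
    have e2' : ∀ p : P, mu (qInt (k + ht p)) = (((k + ht p : ℕ) : ℚ) - 1) / 2 :=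
      fun p => mu_qInt _ (Nat.add_pos_left hk _)
    simp only [e1', e2'] at hmu
    linarith [hmu]
  have hnuF : nu F = ∑ p : P, ((((k + ht p : ℕ) : ℚ) ^ 2 - 1) / 12 - (((ht p : ℕ) : ℚ) ^ 2 - 1) / 12) := by
    rw [Finset.sum_sub_distrib]
    have e1' : ∀ p : P, nu (qInt (ht p)) = (((ht p : ℕ) : ℚ) ^ 2 - 1) / 12 :=
      fun p => nu_qInt _ (hht p)
    have e2' : ∀ p : P, nu (qInt (k + ht p)) = (((k + ht p : ℕ) : ℚ) ^ 2 - 1) / 12 :=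
      fun p => nu_qInt _ (Nat.add_pos_left hk _)
    simp only [e1', e2'] at hnu
    linarith [hnu]
  have hsumQ : 2 * ∑ p : P, ((ht p : ℕ) : ℚ) = (h : ℚ) * Fintype.card P := by
    have := congrArg (fun n : ℕ => (n : ℚ)) hsum
    push_cast at this
    exact this
  constructor
  · rw [polyExp_eq, hmuF]
    have : ∀ p : P, (((k + ht p : ℕ) : ℚ) - 1) / 2 - (((ht p : ℕ) : ℚ) - 1) / 2 = (k : ℚ) / 2 := by
      intro p; push_cast; ring
    simp only [this, Finset.sum_const, Finset.card_univ, nsmul_eq_mul]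
    ring
  · rw [polyVar_eq, hnuF]
    have hterm : ∀ p : P,
        (((k + ht p : ℕ) : ℚ) ^ 2 - 1) / 12 - (((ht p : ℕ) : ℚ) ^ 2 - 1) / 12
          = (k : ℚ) ^ 2 / 12 + 2 * (k : ℚ) * ((ht p : ℕ) : ℚ) / 12 := by
      intro p; push_cast; ring
    simp only [hterm]
    rw [Finset.sum_add_distrib, Finset.sum_const, Finset.card_univ, nsmul_eq_mul]
    rw [← Finset.sum_div, ← Finset.mul_sum]
    have : (2 : ℚ) * (k : ℚ) * ∑ p : P, ((ht p : ℕ) : ℚ)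
        = (k : ℚ) * ((h : ℚ) * Fintype.card P) := by
      linear_combination (k : ℚ) * hsumQ
    rw [this]
    ring
end
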